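/- Let h(y₂,y₃,y₄,y₅,y₆) = y₂y₃ + 2y₄y₅y₆ − y₆² − y₂y₅² − y₃y₄². The set of singular points of the hypersurface {h = 0} in ℂ⁵, i.e. points y with h(y) = 0 and all five partial derivatives of h vanishing at y, is exactly the set {(y₂,y₃,y₄,y₅,y₆) ∈ ℂ⁵ : y₂ = y₄², y₃ = y₅², y₆ = y₄y₅}. -/
import Mathlib


open MvPolynomial

/-- h(y₂,y₃,y₄,y₅,y₆) = y₂y₃ + 2y₄y₅y₆ − y₆² − y₂y₅² − y₃y₄²,
with variables y₂,…,y₆ indexed by `Fin 5`. -/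
noncomputable def hPoly : MvPolynomial (Fin 5) ℂ :=
  X 0 * X 1 + 2 * X 2 * X 3 * X 4 - X 4 ^ 2 - X 0 * X 3 ^ 2 - X 1 * X 2 ^ 2

lemma pderiv_two (i : Fin 5) : pderiv i (2 : MvPolynomial (Fin 5) ℂ) = 0 := by
  rw [show (2 : MvPolynomial (Fin 5) ℂ) = C 2 from (map_ofNat C 2).symm, pderiv_C]

/-- The singular locus of the hypersurface {h = 0} ⊂ ℂ⁵ is exactly
{y₂ = y₄², y₃ = y₅², y₆ = y₄y₅}. -/
theorem singular_locus_h (y : Fin 5 → ℂ) :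
    (eval y hPoly = 0 ∧ ∀ i : Fin 5, eval y (pderiv i hPoly) = 0) ↔
    (y 0 = y 2 ^ 2 ∧ y 1 = y 3 ^ 2 ∧ y 4 = y 2 * y 3) := by
  constructor
  · rintro ⟨-, hd⟩
    have h0 := hd 0
    have h1 := hd 1
    have h4 := hd 4
    simp [hPoly, pderiv_two] at h0 h1 h4
    refine ⟨by linear_combination h1, by linear_combination h0, by linear_combination -h4 / 2⟩
  · rintro ⟨h0, h1, h4⟩
    refine ⟨?_, ?_⟩
    · simp only [hPoly, map_add, map_sub, map_mul, map_pow, eval_X, map_ofNat]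
      rw [h0, h1, h4]; ring
    · intro i
      fin_cases i <;> simp [hPoly, pderiv_two] <;> simp only [h0, h1, h4] <;> ring
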